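/- Let φ : X → Y and ψ : Y → X satisfy dis(φ) ≤ η, dis(ψ) ≤ η, and C(φ,ψ) ≤ η. Then for every δ ≥ 0 and every simplex σ ∈ K_δ^VR(X), the set σ ∪ (ψ∘φ)(σ) has diameter at most δ + 2η; i.e., the inclusion K_δ^VR(X) ↪ K_{δ+2η}^VR(X) and the map ψ_{δ+η} ∘ φ_δ are contiguous. -/
import Mathlib


/-- The Vietoris-Rips complex of `X` at scale `δ`. -/
def vietorisRips (X : Type*) [MetricSpace X] (δ : ℝ) : Set (Finset X) :=
  {σ | σ.Nonempty ∧ ∀ x ∈ σ, ∀ y ∈ σ, dist x y ≤ δ}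

/-- if `φ : X → Y` and `ψ : Y → X` satisfy `dis(φ) ≤ η`, `dis(ψ) ≤ η` and
`C(φ,ψ) ≤ η`, then for every `δ ≥ 0` and every simplex `σ ∈ K_δ^VR(X)`, the set
`σ ∪ (ψ∘φ)(σ)` has diameter at most `δ + 2η`, i.e. it belongs to `K_{δ+2η}^VR(X)`:
the inclusion `K_δ^VR(X) ↪ K_{δ+2η}^VR(X)` and `ψ_{δ+η} ∘ φ_δ` are contiguous. -/
theorem inclusion_contiguous_to_roundtrip
    (X Y : Type*) [MetricSpace X] [MetricSpace Y] [Fintype X] [Fintype Y] [DecidableEq X]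
    (η : ℝ) (φ : X → Y) (ψ : Y → X)
    (hφ : ∀ x x' : X, |dist x x' - dist (φ x) (φ x')| ≤ η)
    (hψ : ∀ y y' : Y, |dist y y' - dist (ψ y) (ψ y')| ≤ η)
    (hC : ∀ (x : X) (y : Y), |dist x (ψ y) - dist y (φ x)| ≤ η)
    (δ : ℝ) (hδ : 0 ≤ δ) (σ : Finset X) (hσ : σ ∈ vietorisRips X δ) :
    σ ∪ σ.image (fun x => ψ (φ x)) ∈ vietorisRips X (δ + 2 * η) := by
  obtain ⟨hne, hd⟩ := hσ
  have hη : 0 ≤ η := by have := hφ hne.choose hne.choose; simpa using this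
  -- key estimate: distance between a point of σ and ψ(φ x') for x' ∈ σ
  have key : ∀ x ∈ σ, ∀ x' ∈ σ, dist x (ψ (φ x')) ≤ δ + 2 * η := by
    intro x hx x' hx'
    have h1 : dist x (ψ (φ x')) ≤ dist (φ x') (φ x) + η := by
      have := hC x (φ x'); rw [abs_le] at this; linarith [this.2]
    have h2 : dist (φ x') (φ x) ≤ dist x' x + η := by
      have := hφ x' x; rw [abs_le] at this; linarith [this.1]
    have h3 := hd x' hx' x hx
    rw [dist_comm x' x] at h2
    linarith [dist_comm x x']
  refine ⟨hne.mono Finset.subset_union_left, ?_⟩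
  intro a ha b hb
  simp only [Finset.mem_union, Finset.mem_image] at ha hb
  rcases ha with ha | ⟨xa, hxa, rfl⟩ <;> rcases hb with hb | ⟨xb, hxb, rfl⟩
  · have := hd a ha b hb; linarith
  · exact key a ha xb hxb
  · rw [dist_comm]; exact key b hb xa hxa
  · have h1 : dist (ψ (φ xa)) (ψ (φ xb)) ≤ dist (φ xa) (φ xb) + η := by
      have := hψ (φ xa) (φ xb); rw [abs_le] at this; linarith [this.1]
    have h2 : dist (φ xa) (φ xb) ≤ dist xa xb + η := by
      have := hφ xa xb; rw [abs_le] at this; linarith [this.1]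
    have h3 := hd xa hxa xb hxb
    linarith
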